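/- arXiv:1004.0072 — 3 statements merged into one kernel-verified Lean document; each statement's English description precedes it below -/
import Mathlib

section
/- Let W be a multiplicative unitary on H⊗H, i.e. W₁₂W₁₃W₂₃ = W₂₃W₁₂. Then the map Δ(a) := W*(1⊗a)W is coassociative on the algebra generated by slices {(id⊗ω)(W) : ω ∈ B(H)_*}. -/
/-!
By the pentagon equation, `W₂₃W₁₂ = W₁₂W₁₃W₂₃`, so the left-hand side is the
conjugate of `x = 1 ⊗ 1 ⊗ a` by `W₁₂W₁₃W₂₃`. Since `W₁₂` is an isometry commuting
with `x`, conjugating by it does nothing, which leaves the conjugate of `x` by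
`W₁₃W₂₃`: the right-hand side.
-/

section Conjugation

variable {R : Type*} [Monoid R] [StarMul R]

theorem star_mul_conj_mul (u v x : R) :
    star (u * v) * x * (u * v) = star v * (star u * x * u) * v := by
  simp only [star_mul, mul_assoc]

theorem star_mul_mul_self_eq_of_commute {u x : R} (hu : star u * u = 1)
    (hux : Commute (star u) x) : star u * x * u = x := by
  rw [hux.eq, mul_assoc, hu, mul_one]

end Conjugation

theorem map_star_mul_mul {F A B : Type*} [Monoid A] [StarMul A] [Monoid B] [StarMul B]
    [FunLike F A B] [MonoidHomClass F A B] [StarHomClass F A B] (φ : F) (u x : A) :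
    φ (star u * x * u) = star (φ u) * φ x * φ u := by
  rw [map_mul, map_mul, map_star]

theorem multiplicative_unitary_comultiplication_coassoc_general
    {A1 A2 A3 : Type*}
    [Ring A1] [StarRing A1] [Algebra ℂ A1]
    [Ring A2] [StarRing A2] [Algebra ℂ A2]
    [Ring A3] [StarRing A3] [Algebra ℂ A3]
    (ι2 : A1 →⋆ₐ[ℂ] A2)
    (leg12 leg13 leg23 : A2 →⋆ₐ[ℂ] A3)
    -- both `leg23 ∘ ι2` and `leg13 ∘ ι2` put an operator in the third leg
    (hleg : ∀ a : A1, leg23 (ι2 a) = leg13 (ι2 a))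
    -- operators in legs (1,2) commute with operators in leg 3
    (hcomm : ∀ (x : A2) (a : A1), Commute (leg12 x) (leg23 (ι2 a)))
    (W : A2) (hW₁ : star W * W = 1)
    (hpentagon : leg12 W * leg13 W * leg23 W = leg23 W * leg12 W) :
    ∀ a : A1,
      star (leg12 W) * leg23 (star W * ι2 a * W) * leg12 W
        = star (leg23 W) * leg13 (star W * ι2 a * W) * leg23 W := by
  intro a
  have hW₁₂ : star (leg12 W) * leg23 (ι2 a) * leg12 W = leg23 (ι2 a) :=
    star_mul_mul_self_eq_of_commute (by rw [← map_star, ← map_mul, hW₁, map_one])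
      (by rw [← map_star]; exact hcomm _ a)
  calc star (leg12 W) * leg23 (star W * ι2 a * W) * leg12 W
      = star (leg23 W * leg12 W) * leg23 (ι2 a) * (leg23 W * leg12 W) := by
        rw [map_star_mul_mul, star_mul_conj_mul]
    _ = star (leg12 W * leg13 W * leg23 W) * leg23 (ι2 a) * (leg12 W * leg13 W * leg23 W) := by
        rw [hpentagon]
    _ = star (leg23 W) * leg13 (star W * ι2 a * W) * leg23 W := by
        rw [star_mul_conj_mul, star_mul_conj_mul, hW₁₂, map_star_mul_mul, hleg]

/-- let `W` be a multiplicative unitary, i.e. a unitary in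
`A2 = B(H⊗H)` satisfying the pentagon equation `W₁₂W₁₃W₂₃ = W₂₃W₁₂` in
`A3 = B(H⊗H⊗H)`.  Then the map `Δ(a) := W*(1⊗a)W` is coassociative:
`(Δ⊗id)(Δ a) = (id⊗Δ)(Δ a)`, where `(Δ⊗id)(y) = W₁₂* y₂₃ W₁₂` and
`(id⊗Δ)(y) = W₂₃* y₁₃ W₂₃`.  Here `A1 = B(H)` and the leg embeddings are
abstracted as unital *-homomorphisms `ι2 : A1 → A2` (second leg) and
`leg12, leg13, leg23 : A2 → A3` satisfying the obvious compatibilities. -/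
theorem multiplicative_unitary_comultiplication_coassoc
    {A1 A2 A3 : Type*}
    [Ring A1] [StarRing A1] [Algebra ℂ A1] [StarModule ℂ A1]
    [Ring A2] [StarRing A2] [Algebra ℂ A2] [StarModule ℂ A2]
    [Ring A3] [StarRing A3] [Algebra ℂ A3] [StarModule ℂ A3]
    (ι2 : A1 →⋆ₐ[ℂ] A2)
    (leg12 leg13 leg23 : A2 →⋆ₐ[ℂ] A3)
    -- both `leg23 ∘ ι2` and `leg13 ∘ ι2` put an operator in the third leg
    (hleg : ∀ a : A1, leg23 (ι2 a) = leg13 (ι2 a))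
    -- operators in legs (1,2) commute with operators in leg 3
    (hcomm : ∀ (x : A2) (a : A1), Commute (leg12 x) (leg23 (ι2 a)))
    (W : A2) (hW₁ : star W * W = 1) (hW₂ : W * star W = 1)
    (hpentagon : leg12 W * leg13 W * leg23 W = leg23 W * leg12 W) :
    ∀ a : A1,
      star (leg12 W) * leg23 (star W * ι2 a * W) * leg12 W
        = star (leg23 W) * leg13 (star W * ι2 a * W) * leg23 W :=
  multiplicative_unitary_comultiplication_coassoc_general ι2 leg12 leg13 leg23 hleg hcomm W hW₁
    hpentagon
end

section
/- If x_{ij} is the quantum Serre element in a matrix algebra A as above, central in A, and it satisfies both k_i x_{ij} k_i⁻¹ = q_i^{2−a_{ij}} x_{ij} and k_j x_{ij} k_j⁻¹ = q_j^{a_{ji}(1−a_{ij})+2} x_{ij}, where q_i = q^{d_i} with q > 0, q ≠ 1, and d_i ≥ 1 integers, then x_{ij} = 0. (Key point: if a_{ij} ≠ −2 then q_i^{2−a_{ij}} ≠ 1; if a_{ij} = −2 then q_j^{a_{ji}(1−a_{ij})+2} ≠ 1, using that entries a_{ij}, a_{ji} of a Cartan matrix with a_{ij} = −2 force a_{ji}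 = −1.) -/
/-! Since `x` is central, conjugating it by `kᵢ` does nothing, so `x = cᵢ • x` with
`cᵢ = q^(dᵢ (2 - aᵢⱼ))`. As `aᵢⱼ ≤ 0` and `dᵢ ≥ 1`, the exponent is positive, and a positive real
`q ≠ 1` has no nontrivial power equal to `1`; hence `cᵢ ≠ 1` and `(cᵢ - 1) • x = 0` forces `x = 0`. -/

theorem mul_mul_eq_self_of_forall_mul_comm {M : Type*} [Monoid M] {x k kinv : M}
    (hx : ∀ a : M, x * a = a * x) (hk : k * kinv = 1) : k * x * kinv = x := by
  rw [mul_assoc, hx kinv, ← mul_assoc, hk, one_mul]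

theorem eq_zero_of_smul_eq_self {R M : Type*} [DivisionRing R] [AddCommGroup M] [Module R M]
    {c : R} {x : M} (hc : c ≠ 1) (hx : c • x = x) : x = 0 := by
  have hsub : (c - 1) • x = 0 := by rw [sub_smul, one_smul, hx, sub_self]
  exact (smul_eq_zero.mp hsub).resolve_left (sub_ne_zero.mpr hc)

theorem Complex.ofReal_pow_zpow_ne_one {q : ℝ} (hq0 : 0 < q) (hq1 : q ≠ 1) {n : ℕ} {m : ℤ}
    (hn : n ≠ 0) (hm : m ≠ 0) : ((q : ℂ) ^ n) ^ m ≠ 1 := by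
  have hreal : q ^ ((n : ℤ) * m) ≠ 1 := by
    rw [Ne, zpow_eq_one_iff_right₀ hq0.le hq1]
    exact mul_ne_zero (Int.natCast_ne_zero.mpr hn) hm
  rwa [← Complex.ofReal_pow, ← Complex.ofReal_zpow, ← Complex.ofReal_one, Ne, Complex.ofReal_inj,
    ← zpow_natCast, ← zpow_mul]

theorem serre_element_vanishes_general
    {A : Type*} [Ring A] [Algebra ℂ A]
    (aij : ℤ) (haij : aij ≤ 0)
    (di : ℕ) (hdi : 1 ≤ di)
    (q : ℝ) (hq0 : 0 < q) (hq1 : q ≠ 1)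
    (ki kiinv : A)
    (hki : ki * kiinv = 1)
    (x : A) (hx_central : ∀ a : A, x * a = a * x)
    (hconj_i : ki * x * kiinv = (((q : ℂ) ^ di) ^ (2 - aij)) • x) :
    x = 0 := by
  have hscalar : ((q : ℂ) ^ di) ^ (2 - aij) ≠ 1 :=
    Complex.ofReal_pow_zpow_ne_one hq0 hq1 (by omega) (by omega)
  refine eq_zero_of_smul_eq_self hscalar ?_
  rw [← hconj_i, mul_mul_eq_self_of_forall_mul_comm hx_central hki]

/-- let `(a_{ij})` be (entries of) a Cartan matrix of finite type
(`a_{ij}, a_{ji} ≤ 0`, `a_{ij}a_{ji} ≤ 3` for `i ≠ j`), `d_i, d_j ≥ 1` with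
`d_i a_{ij} = d_j a_{ji}`, `q > 0` real with `q ≠ 1`, `q_i = q^{d_i}`.
If the quantum Serre element `x = x_{ij}` is central in `A` and satisfies both
`k_i x k_i⁻¹ = q_i^{2−a_{ij}} x` and `k_j x k_j⁻¹ = q_j^{a_{ji}(1−a_{ij})+2} x`,
then `x = 0`. -/
theorem serre_element_vanishes
    {A : Type*} [Ring A] [Algebra ℂ A]
    (aij aji : ℤ) (haij : aij ≤ 0) (haji : aji ≤ 0) (hfin : aij * aji ≤ 3)
    (di dj : ℕ) (hdi : 1 ≤ di) (hdj : 1 ≤ dj)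
    (hsym : (di : ℤ) * aij = (dj : ℤ) * aji)
    (q : ℝ) (hq0 : 0 < q) (hq1 : q ≠ 1)
    (ki kiinv kj kjinv : A)
    (hki : ki * kiinv = 1) (hki' : kiinv * ki = 1)
    (hkj : kj * kjinv = 1) (hkj' : kjinv * kj = 1)
    (x : A) (hx_central : ∀ a : A, x * a = a * x)
    (hconj_i : ki * x * kiinv = (((q : ℂ) ^ di) ^ (2 - aij)) • x)
    (hconj_j : kj * x * kjinv = (((q : ℂ) ^ dj) ^ (aji * (1 - aij) + 2)) • x) :
    x = 0 :=
  serre_element_vanishes_general aij haij di hdi q hq0 hq1 ki kiinv hki x hx_central hconj_i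
end

section
/- Every Hochschild 1-cocycle on a finite-dimensional semisimple ℂ-algebra A with values in a finite-dimensional A-bimodule M is a coboundary: if D : A → M satisfies D(ab) = D(a)·b + a·D(b), then there exists m ∈ M with D(a) = ma − am for all a ∈ A. -/
/-!
A finite-dimensional semisimple algebra over a field of characteristic zero is separable. Its
regular trace form `τ(a, b) = tr(x ↦ abx)` is nondegenerate: the left radical of `τ` is a left
ideal, hence generated by an idempotent `e`, and `τ(e, e)` is the rank of `x ↦ ex`. For dual bases
`(bᵢ)`, `(bᵢ*)` of `τ`, the Casimir tensor `t = ∑ bᵢ ⊗ bᵢ*` commutes with `A`, and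
`τ(∑ bᵢ bᵢ*, z) = tr(x ↦ zx)` shows that `c = ∑ bᵢ bᵢ*` is a unit, so `e = (c⁻¹ ⊗ 1) t` is a
separability idempotent. Given one, `m = -∑ eᵢ • D(eᵢ')` for `e = ∑ eᵢ ⊗ eᵢ'` makes every
derivation `D` inner.
-/

open LinearMap TensorProduct MulOpposite

section SeparabilityIdempotent

variable {K A : Type*} [CommRing K] [Ring A] [Algebra K A]

def IsSeparabilityIdempotent (e : A ⊗[K] A) : Prop :=
  mul' K A e = 1 ∧ ∀ a : A, (a ⊗ₜ 1) * e = e * (1 ⊗ₜ[K] a)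

lemma mul'_tmul_one_mul (a : A) (t : A ⊗[K] A) :
    mul' K A ((a ⊗ₜ 1) * t) = a * mul' K A t := by
  induction t using TensorProduct.induction_on with
  | zero => simp
  | tmul x y => simp [mul_assoc]
  | add s t hs ht => simp [mul_add, hs, ht]

lemma mul'_mul_one_tmul (a : A) (t : A ⊗[K] A) :
    mul' K A (t * (1 ⊗ₜ a)) = mul' K A t * a := by
  induction t using TensorProduct.induction_on with
  | zero => simp
  | tmul x y => simp [mul_assoc]
  | add s t hs ht => simp [add_mul, hs, ht]

variable {M : Type*} [AddCommGroup M] [Module K M] [Module A M] [Module Aᵐᵒᵖ M]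

def IsBimoduleDerivation (D : A →ₗ[K] M) : Prop :=
  ∀ a b : A, D (a * b) = a • D b + op b • D a

variable {D : A →ₗ[K] M}

lemma IsBimoduleDerivation.algebraMap_smul (hD : IsBimoduleDerivation D) (r : K) (y : A) :
    algebraMap K A r • D y = D (r • y) := by
  have hD1 : D 1 = 0 := by simpa using hD 1 1
  rw [Algebra.smul_def, hD, ← mul_one (algebraMap K A r), ← Algebra.smul_def, map_smul, hD1,
    smul_zero, smul_zero, add_zero]

/-- Balanced because `D` absorbs scalars through the derivation rule; no compatibility of the
`K`- and `A`-actions on `M` is needed. -/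
def IsBimoduleDerivation.tensorLift (hD : IsBimoduleDerivation D) : A ⊗[K] A →+ M :=
  liftAddHom ((AddMonoidHom.smul : A →+ M →+ M).compl₂ D.toAddMonoidHom) fun r x y => by
    change (r • x) • D y = x • D (r • y)
    rw [Algebra.smul_def, Algebra.commutes, mul_smul, hD.algebraMap_smul]

@[simp]
lemma IsBimoduleDerivation.tensorLift_tmul (hD : IsBimoduleDerivation D) (x y : A) :
    hD.tensorLift (x ⊗ₜ y) = x • D y :=
  rfl

lemma IsBimoduleDerivation.tensorLift_tmul_one_mul (hD : IsBimoduleDerivation D) (a : A)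
    (t : A ⊗[K] A) : hD.tensorLift ((a ⊗ₜ 1) * t) = a • hD.tensorLift t := by
  induction t using TensorProduct.induction_on with
  | zero => simp
  | tmul x y => simp [mul_smul]
  | add s t hs ht => simp [mul_add, hs, ht]

variable [SMulCommClass A Aᵐᵒᵖ M]

lemma IsBimoduleDerivation.tensorLift_mul_one_tmul (hD : IsBimoduleDerivation D) (a : A)
    (t : A ⊗[K] A) :
    hD.tensorLift (t * (1 ⊗ₜ a)) = mul' K A t • D a + op a • hD.tensorLift t := by
  induction t using TensorProduct.induction_on with
  | zero => simp
  | tmul x y => simp [hD y a, mul_smul, smul_comm x (op a)]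
  | add s t hs ht => simp only [add_mul, map_add, hs, ht, add_smul, smul_add]; abel

theorem IsSeparabilityIdempotent.exists_eq_op_smul_sub_smul {e : A ⊗[K] A}
    (he : IsSeparabilityIdempotent e) (hD : IsBimoduleDerivation D) :
    ∃ m : M, ∀ a : A, D a = op a • m - a • m := by
  refine ⟨-hD.tensorLift e, fun a => ?_⟩
  have h := congrArg hD.tensorLift (he.2 a)
  rw [hD.tensorLift_tmul_one_mul, hD.tensorLift_mul_one_tmul, he.1, one_smul] at h
  rw [smul_neg, smul_neg, h]
  abel

end SeparabilityIdempotent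

section RegularTraceForm

variable (K A : Type*) [Field K] [Ring A] [Algebra K A]

noncomputable def regularTraceForm : LinearMap.BilinForm K A :=
  (mul K A).compr₂ (trace K A ∘ₗ (Algebra.lmul K A).toLinearMap)

variable {K A}

lemma regularTraceForm_apply (a b : A) :
    regularTraceForm K A a b = trace K A (Algebra.lmul K A (a * b)) :=
  rfl

lemma regularTraceForm_isSymm : (regularTraceForm K A).IsSymm :=
  ⟨fun a b => by simp only [regularTraceForm_apply, map_mul, trace_mul_comm]⟩

lemma regularTraceForm_mul_assoc (a b c : A) :
    regularTraceForm K A (a * b) c = regularTraceForm K A a (b * c) := by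
  rw [regularTraceForm_apply, regularTraceForm_apply, mul_assoc]

lemma regularTraceForm_nondegenerate [FiniteDimensional K A] [CharZero K] [IsSemisimpleRing A] :
    (regularTraceForm K A).Nondegenerate := by
  let radical : Ideal A :=
    { carrier := {x | ∀ b, regularTraceForm K A x b = 0}
      add_mem' := fun hx hy b => by simp [hx b, hy b]
      zero_mem' := fun b => by simp
      smul_mem' := fun a x hx b => by
        rw [smul_eq_mul, regularTraceForm_isSymm.eq, ← regularTraceForm_mul_assoc,
          regularTraceForm_isSymm.eq, hx] }
  obtain ⟨e, he, hspan⟩ := IsSemisimpleRing.ideal_eq_span_idempotent radical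
  have he0 : e = 0 := by
    have hmem : e ∈ radical := hspan ▸ Ideal.mem_span_singleton_self e
    have htrace : trace K A (Algebra.lmul K A e) = 0 := by
      simpa [regularTraceForm_apply, he.eq] using hmem e
    simpa using congr($((he.map (Algebra.lmul K A)).eq_zero_of_trace_eq_zero htrace) 1)
  have hsep (x : A) (hx : ∀ b, regularTraceForm K A x b = 0) : x = 0 := by
    have : x ∈ radical := hx
    simpa [hspan, he0] using this
  exact ⟨hsep, fun x hx => hsep x fun b => by rw [regularTraceForm_isSymm.eq]; exact hx b⟩

end RegularTraceForm

section Casimir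

variable {K A ι : Type*} [Field K] [Ring A] [Algebra K A] [Fintype ι] [DecidableEq ι]
  {B : LinearMap.BilinForm K A} (hB : B.Nondegenerate) (b : Module.Basis ι K A)

noncomputable def casimir : A ⊗[K] A :=
  ∑ i, b i ⊗ₜ B.dualBasis hB b i

lemma sum_apply_dualBasis_smul_dualBasis (z : A) :
    ∑ i, B z (b i) • B.dualBasis hB b i = z := by
  conv_rhs => rw [← (B.dualBasis hB b).sum_repr z]
  simp

lemma repr_eq_apply_dualBasis (hB' : B.IsSymm) (z : A) (i : ι) :
    b.repr z i = B z (B.dualBasis hB b i) := by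
  have h := BilinForm.dualBasis_repr_apply hB (B.dualBasis hB b) z i
  rwa [B.dualBasis_dualBasis hB hB'] at h

lemma sum_apply_dualBasis_smul (hB' : B.IsSymm) (z : A) :
    ∑ i, B z (B.dualBasis hB b i) • b i = z := by
  simpa [repr_eq_apply_dualBasis hB b hB'] using b.sum_repr z

lemma tmul_one_mul_casimir (hB' : B.IsSymm) (hassoc : ∀ x y z, B (x * y) z = B x (y * z))
    (a : A) : (a ⊗ₜ 1) * casimir hB b = casimir hB b * (1 ⊗ₜ[K] a) := by
  calc (a ⊗ₜ 1) * casimir hB b = ∑ i, (a * b i) ⊗ₜ[K] B.dualBasis hB b i := by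
        simp [casimir, Finset.mul_sum]
    _ = ∑ i, ∑ j, B (a * b i) (B.dualBasis hB b j) • (b j ⊗ₜ[K] B.dualBasis hB b i) := by
        simp_rw [smul_tmul', ← sum_tmul, sum_apply_dualBasis_smul hB b hB']
    _ = ∑ j, ∑ i, B (B.dualBasis hB b j * a) (b i) • (b j ⊗ₜ[K] B.dualBasis hB b i) := by
        rw [Finset.sum_comm]
        refine Finset.sum_congr rfl fun j _ => Finset.sum_congr rfl fun i _ => ?_
        rw [hassoc (B.dualBasis hB b j), hB'.eq (B.dualBasis hB b j)]
    _ = casimir hB b * (1 ⊗ₜ[K] a) := by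
        simp_rw [← tmul_smul, ← tmul_sum, sum_apply_dualBasis_smul_dualBasis hB b]
        simp [casimir, Finset.sum_mul]

lemma commute_mul'_casimir (hB' : B.IsSymm) (hassoc : ∀ x y z, B (x * y) z = B x (y * z))
    (a : A) : Commute a (mul' K A (casimir hB b)) := by
  rw [Commute, SemiconjBy, ← mul'_tmul_one_mul, tmul_one_mul_casimir hB b hB' hassoc,
    mul'_mul_one_tmul]

end Casimir

section Semisimple

variable {K A ι : Type*} [Field K] [Ring A] [Algebra K A] [Fintype ι] [DecidableEq ι]
  (hB : (regularTraceForm K A).Nondegenerate) (b : Module.Basis ι K A)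

lemma regularTraceForm_mul'_casimir (z : A) :
    regularTraceForm K A (mul' K A (casimir hB b)) z = trace K A (Algebra.lmul K A z) := by
  rw [trace_eq_matrix_trace K b, Matrix.trace]
  simp only [casimir, map_sum, mul'_apply, LinearMap.sum_apply, Matrix.diag_apply, toMatrix_apply,
    Algebra.coe_lmul_eq_mul, mul_apply', repr_eq_apply_dualBasis hB b regularTraceForm_isSymm]
  refine Finset.sum_congr rfl fun i _ => ?_
  rw [regularTraceForm_mul_assoc, regularTraceForm_mul_assoc, regularTraceForm_isSymm.eq z,
    regularTraceForm_mul_assoc]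

lemma isUnit_mul'_casimir_regularTraceForm [FiniteDimensional K A] :
    IsUnit (mul' K A (casimir hB b)) := by
  have hinj : Function.Injective (Algebra.lmul K A (mul' K A (casimir hB b))) := by
    refine (injective_iff_map_eq_zero _).mpr fun v hv => hB.1 v fun w => ?_
    have hv : mul' K A (casimir hB b) * v = 0 := hv
    rw [regularTraceForm_apply, ← regularTraceForm_mul'_casimir hB b, ← regularTraceForm_mul_assoc,
      hv, map_zero, LinearMap.zero_apply]
  rw [← Algebra.lmul_isUnit_iff (R := K), Module.End.isUnit_iff]
  exact ⟨hinj, injective_iff_surjective.mp hinj⟩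

end Semisimple

theorem exists_isSeparabilityIdempotent {K A : Type*} [Field K] [CharZero K] [Ring A]
    [Algebra K A] [FiniteDimensional K A] [IsSemisimpleRing A] :
    ∃ e : A ⊗[K] A, IsSeparabilityIdempotent e := by
  have hB := regularTraceForm_nondegenerate (K := K) (A := A)
  set t := casimir hB (Module.finBasis K A)
  obtain ⟨c, hc⟩ := isUnit_mul'_casimir_regularTraceForm hB (Module.finBasis K A)
  have hcomm (a : A) : Commute a ↑c⁻¹ := (hc ▸ commute_mul'_casimir hB _ regularTraceForm_isSymm
    regularTraceForm_mul_assoc a).units_inv_right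
  refine ⟨((c⁻¹ : Aˣ) : A) ⊗ₜ[K] (1 : A) * t, ?_, fun a => ?_⟩
  · rw [mul'_tmul_one_mul, ← hc, Units.inv_mul]
  · calc (a ⊗ₜ 1) * ((↑c⁻¹ ⊗ₜ 1) * t) = (↑c⁻¹ ⊗ₜ 1) * ((a ⊗ₜ 1) * t) := by
          rw [← mul_assoc, ← mul_assoc, Algebra.TensorProduct.tmul_mul_tmul,
            Algebra.TensorProduct.tmul_mul_tmul, (hcomm a).eq]
      _ = (↑c⁻¹ ⊗ₜ 1) * t * (1 ⊗ₜ a) := by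
          rw [tmul_one_mul_casimir _ _ regularTraceForm_isSymm regularTraceForm_mul_assoc,
            mul_assoc]

theorem hochschild_one_cocycle_is_coboundary_general
    {A : Type*} [Ring A] [Algebra ℂ A] [FiniteDimensional ℂ A] [IsSemisimpleRing A]
    {M : Type*} [AddCommGroup M] [Module ℂ M]
    [Module A M] [Module Aᵐᵒᵖ M] [SMulCommClass A Aᵐᵒᵖ M]
    (D : A →ₗ[ℂ] M)
    (hD : ∀ a b : A, D (a * b) = a • D b + (MulOpposite.op b) • D a) :
    ∃ m : M, ∀ a : A, D a = (MulOpposite.op a) • m - a • m := by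
  obtain ⟨e, he⟩ := exists_isSeparabilityIdempotent (K := ℂ) (A := A)
  exact he.exists_eq_op_smul_sub_smul hD

/-- every Hochschild 1-cocycle on a finite-dimensional semisimple
ℂ-algebra `A` with values in a finite-dimensional `A`-bimodule `M` is a
coboundary: if `D : A → M` is ℂ-linear with `D(ab) = a·D(b) + D(a)·b`, then
there is `m ∈ M` with `D(a) = m·a − a·m` — written with the right action of `A`
implemented by the left action of `Aᵐᵒᵖ`.  Equivalently `HH¹(A, M) = 0`. -/
theorem hochschild_one_cocycle_is_coboundary
    {A : Type*} [Ring A] [Algebra ℂ A] [FiniteDimensional ℂ A] [IsSemisimpleRing A]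
    {M : Type*} [AddCommGroup M] [Module ℂ M] [FiniteDimensional ℂ M]
    [Module A M] [Module Aᵐᵒᵖ M] [SMulCommClass A Aᵐᵒᵖ M]
    (D : A →ₗ[ℂ] M)
    (hD : ∀ a b : A, D (a * b) = a • D b + (MulOpposite.op b) • D a) :
    ∃ m : M, ∀ a : A, D a = (MulOpposite.op a) • m - a • m :=
  hochschild_one_cocycle_is_coboundary_general D hD
end
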